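/- arXiv:2505.05764 — 6 statements merged into one kernel-verified Lean document; each statement's English description precedes it below -/
import Mathlib

section
/- Let S be a Cu-semigroup and let x, y be full elements of S with x ≤ y. Assume that F_y(S) ≠ ∅. Then (1/ρ(x,y))·rc(S,y) ≤ rc(S,x). If moreover ρ(y,x) < ∞, then in addition rc(S,x) ≤ ρ(y,x)·rc(S,y) (with the convention γ·∞ = ∞ for γ ∈ (0,∞)). -/
open scoped ENNReal

/-- `x' ≪ x`: for every increasing sequence whose supremum is `≥ x`,
some term of the sequence dominates `x'`. -/
def CuWayBelow {S : Type*} [Preorder S] (x' x : S) : Prop :=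
  ∀ f : ℕ → S, Monotone f → ∀ s : S, IsLUB (Set.range f) s → x ≤ s → ∃ n, x' ≤ f n

/-- A `Cu`-semigroup: a partially ordered abelian monoid whose least element is `0`,
satisfying the axioms (O1)–(O4). -/
class CuSemigroup (S : Type*) extends AddCommMonoid S, PartialOrder S, IsOrderedAddMonoid S where
  zero_le : ∀ x : S, 0 ≤ x
  O1 : ∀ f : ℕ → S, Monotone f → ∃ s : S, IsLUB (Set.range f) s
  O2 : ∀ x : S, ∃ f : ℕ → S, (∀ n, CuWayBelow (f n) (f (n + 1))) ∧ IsLUB (Set.range f) x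
  O3 : ∀ {x' x y' y : S}, CuWayBelow x' x → CuWayBelow y' y → CuWayBelow (x' + y') (x + y)
  O4 : ∀ f g : ℕ → S, Monotone f → Monotone g → ∀ a b : S,
      IsLUB (Set.range f) a → IsLUB (Set.range g) b →
      IsLUB (Set.range fun n => f n + g n) (a + b)

/-- A functional on a `Cu`-semigroup: a map `S → [0,∞]` which is additive, order
preserving, sends `0` to `0`, and preserves suprema of increasing sequences. -/
structure IsCuFunctional {S : Type*} [CuSemigroup S] (Λ : S → ℝ≥0∞) : Prop where
  map_zero : Λ 0 = 0
  map_add : ∀ x y : S, Λ (x + y) = Λ x + Λ y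
  mono : Monotone Λ
  map_sup : ∀ f : ℕ → S, Monotone f → ∀ s : S, IsLUB (Set.range f) s → Λ s = ⨆ n, Λ (f n)

/-- `x` is full if `∞ · x = sup_n (n • x)` is the largest element of `S`. -/
def IsFull {S : Type*} [CuSemigroup S] (x : S) : Prop :=
  ∀ s : S, IsLUB (Set.range fun n : ℕ => n • x) s → ∀ y : S, y ≤ s

/-- `F_w(S) ≠ ∅`: there exists a functional normalized at `w`. -/
def FNormNonempty {S : Type*} [CuSemigroup S] (w : S) : Prop :=
  ∃ Λ : S → ℝ≥0∞, IsCuFunctional Λ ∧ Λ w = 1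

/-- The rank ratio `ρ(x, y)`: the infimum of all `r ∈ (0,∞)` with
`λ(x) ≤ r·λ(y)` for every functional `λ`; `∞` if there is no such `r`. -/
noncomputable def rankRatio {S : Type*} [CuSemigroup S] (x y : S) : ℝ≥0∞ :=
  sInf {r : ℝ≥0∞ | 0 < r ∧ r ≠ ⊤ ∧ ∀ Λ : S → ℝ≥0∞, IsCuFunctional Λ → Λ x ≤ r * Λ y}

/-- `S` has `r`-comparison relative to `w`. -/
def HasRComparison {S : Type*} [CuSemigroup S] (r : ℝ≥0∞) (w : S) : Prop :=
  ∀ x y : S, (∀ Λ : S → ℝ≥0∞, IsCuFunctional Λ → Λ x + r * Λ w ≤ Λ y) → x ≤ y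

/-- The radius of comparison of `S` relative to `w`: the infimum of all `r ∈ (0,∞)`
for which `S` has `r`-comparison relative to `w`; `∞` if there is no such `r`. -/
noncomputable def rc {S : Type*} [CuSemigroup S] (w : S) : ℝ≥0∞ :=
  sInf {r : ℝ≥0∞ | 0 < r ∧ r ≠ ⊤ ∧ HasRComparison r w}

/-!
A pointwise inequality `λ(w) ≤ c·λ(w')` between functionals turns `r`-comparison relative
to `w` into `c·r`-comparison relative to `w'`, so `rc(S,w') ≤ c·rc(S,w)`. Applied with
`c = ρ(x,y)` and `c = ρ(y,x)` this gives both inequalities, once the rank ratios are known to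
satisfy `λ(x) ≤ ρ(x,y)·λ(y)` and to lie in `(0,∞)`. Here `x ≤ y` gives `ρ(x,y) ≤ 1`, and a
functional `λ₀ ∈ F_y(S)` has `λ₀(x) ∈ (0,1]` (nonzero because `x` is full), which keeps both
ratios away from `0`.
-/

namespace CuSemigroup

variable {S : Type*} [CuSemigroup S]

lemma nsmul_monotone (x : S) : Monotone fun n : ℕ => n • x :=
  fun _ _ h => nsmul_le_nsmul_left (zero_le x) h

end CuSemigroup

namespace IsCuFunctional

variable {S : Type*} [CuSemigroup S] {Λ : S → ℝ≥0∞}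

lemma map_nsmul (hΛ : IsCuFunctional Λ) (n : ℕ) (x : S) : Λ (n • x) = n * Λ x := by
  let φ : S →+ ℝ≥0∞ := ⟨⟨Λ, hΛ.map_zero⟩, hΛ.map_add⟩
  simpa [φ, nsmul_eq_mul] using _root_.map_nsmul φ n x

/-- Every element lies below `∞·x`, so a functional vanishing on `x` vanishes everywhere. -/
lemma ne_zero_of_isFull (hΛ : IsCuFunctional Λ) {x w : S} (hx : IsFull x) (hw : Λ w ≠ 0) :
    Λ x ≠ 0 := by
  intro hx0
  obtain ⟨s, hs⟩ := CuSemigroup.O1 _ (CuSemigroup.nsmul_monotone x)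
  have hs0 : Λ s = 0 := by
    simp [hΛ.map_sup _ (CuSemigroup.nsmul_monotone x) s hs, hΛ.map_nsmul, hx0]
  exact hw (le_antisymm (hs0 ▸ hΛ.mono (hx s hs w)) bot_le)

lemma div_le_rankRatio (hΛ : IsCuFunctional Λ) {x y : S} (hy0 : Λ y ≠ 0) (hyt : Λ y ≠ ⊤) :
    Λ x / Λ y ≤ rankRatio x y :=
  le_sInf fun _ ⟨_, _, hr⟩ => (ENNReal.div_le_iff hy0 hyt).2 (hr Λ hΛ)

lemma rankRatio_ne_zero (hΛ : IsCuFunctional Λ) {x y : S} (hx0 : Λ x ≠ 0) (hy0 : Λ y ≠ 0)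
    (hyt : Λ y ≠ ⊤) : rankRatio x y ≠ 0 :=
  ((ENNReal.div_pos hx0 hyt).trans_le (hΛ.div_le_rankRatio hy0 hyt)).ne'

end IsCuFunctional

section RankRatio

variable {S : Type*} [CuSemigroup S]

lemma rankRatio_le_one_of_le {x y : S} (hxy : x ≤ y) : rankRatio x y ≤ 1 :=
  sInf_le ⟨one_pos, ENNReal.one_ne_top, fun _ hΛ => by simpa using hΛ.mono hxy⟩

lemma le_rankRatio_mul {x y : S} (h0 : rankRatio x y ≠ 0) (ht : rankRatio x y ≠ ⊤)
    {Λ : S → ℝ≥0∞} (hΛ : IsCuFunctional Λ) : Λ x ≤ rankRatio x y * Λ y := by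
  rcases eq_or_ne (Λ y) 0 with hy0 | hy0
  · obtain ⟨r, ⟨-, -, hr⟩, -⟩ := sInf_lt_iff.mp (lt_top_iff_ne_top.mpr ht)
    simpa [hy0] using hr Λ hΛ
  rcases eq_or_ne (Λ y) ⊤ with hyt | hyt
  · simp [hyt, ENNReal.mul_top h0]
  calc Λ x = Λ x / Λ y * Λ y := (ENNReal.div_mul_cancel hy0 hyt).symm
    _ ≤ rankRatio x y * Λ y := by gcongr; exact hΛ.div_le_rankRatio hy0 hyt

lemma rc_le_mul_rc {w w' : S} {c : ℝ≥0∞} (hc0 : c ≠ 0) (hct : c ≠ ⊤)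
    (h : ∀ Λ : S → ℝ≥0∞, IsCuFunctional Λ → Λ w ≤ c * Λ w') :
    rc w' ≤ c * rc w := by
  rw [mul_comm, ← ENNReal.div_le_iff_le_mul (Or.inl hc0) (Or.inl hct), ENNReal.div_eq_inv_mul]
  refine le_sInf fun r ⟨hr0, hrt, hr⟩ => ?_
  have hcr : rc w' ≤ c * r := by
    refine sInf_le ⟨ENNReal.mul_pos hc0 hr0.ne', ENNReal.mul_ne_top hct hrt, fun a b hab => ?_⟩
    refine hr a b fun Λ hΛ => le_trans ?_ (hab Λ hΛ)
    calc Λ a + r * Λ w ≤ Λ a + r * (c * Λ w') := by gcongr; exact h Λ hΛ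
      _ = Λ a + c * r * Λ w' := by ring
  calc c⁻¹ * rc w' ≤ c⁻¹ * (c * r) := by gcongr
    _ = r := by rw [← mul_assoc, ENNReal.inv_mul_cancel hc0 hct, one_mul]

lemma rc_le_rankRatio_mul_rc {w w' : S} (h0 : rankRatio w w' ≠ 0) (ht : rankRatio w w' ≠ ⊤) :
    rc w' ≤ rankRatio w w' * rc w :=
  rc_le_mul_rc h0 ht fun _ hΛ => le_rankRatio_mul h0 ht hΛ

end RankRatio

theorem stmt0_general {S : Type*} [CuSemigroup S] (x y : S)
    (hx : IsFull x) (hxy : x ≤ y) (hFy : FNormNonempty y) :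
    (rankRatio x y)⁻¹ * rc y ≤ rc x ∧
      (rankRatio y x ≠ ⊤ → rc x ≤ rankRatio y x * rc y) := by
  obtain ⟨Λ₀, hΛ₀, hΛ₀y⟩ := hFy
  have hy0 : Λ₀ y ≠ 0 := by simp [hΛ₀y]
  have hyt : Λ₀ y ≠ ⊤ := by simp [hΛ₀y]
  have hx0 : Λ₀ x ≠ 0 := hΛ₀.ne_zero_of_isFull hx hy0
  have hxt : Λ₀ x ≠ ⊤ := ne_top_of_le_ne_top hyt (hΛ₀.mono hxy)
  have hρt : rankRatio x y ≠ ⊤ :=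
    ne_top_of_le_ne_top ENNReal.one_ne_top (rankRatio_le_one_of_le hxy)
  refine ⟨?_, fun hρ't => rc_le_rankRatio_mul_rc (hΛ₀.rankRatio_ne_zero hy0 hx0 hxt) hρ't⟩
  rw [← ENNReal.div_eq_inv_mul]
  exact ENNReal.div_le_of_le_mul' <|
    rc_le_rankRatio_mul_rc (hΛ₀.rankRatio_ne_zero hx0 hy0 hyt) hρt

/-- Theorem (Rkrc): for full `x ≤ y` with `F_y(S) ≠ ∅`,
`(1/ρ(x,y)) · rc(S,y) ≤ rc(S,x)`, and if moreover `ρ(y,x) < ∞` then also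
`rc(S,x) ≤ ρ(y,x) · rc(S,y)`. -/
theorem stmt0 {S : Type*} [CuSemigroup S] (x y : S)
    (hx : IsFull x) (hy : IsFull y) (hxy : x ≤ y) (hFy : FNormNonempty y) :
    (rankRatio x y)⁻¹ * rc y ≤ rc x ∧
      (rankRatio y x ≠ ⊤ → rc x ≤ rankRatio y x * rc y) :=
  stmt0_general x y hx hxy hFy
end

section
/- Let S be a Cu-semigroup, let y be a full element of S, and let (y_n)_{n≥1} be a sequence of full elements of S with y_n ≤ y_{n+1} ≤ y for all n. Assume that F_y(S) ≠ ∅ and that lim_{n→∞} ρ(y, y_n) = 1 (the sequence (ρ(y,y_n)) is decreasing, so the limit exists). Then lim_{n→∞} rc(S, y_n) = rc(S, y). -/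
open scoped ENNReal

/-
If `S` has `r`-comparison relative to `w` and `λ(w) ≤ c·λ(w')` for every functional `λ`, then it
has `(r·c)`-comparison relative to `w'`. With `c = 1` this makes `rc` antitone in the reference
element, so `rc(S, y) ≤ rc(S, y_n)`. Conversely, given `t > rc(S, y)` pick `r < t` with
`r`-comparison relative to `y`; as `ρ(y, y_n) → 1 < t / r`, some `y_n` satisfies
`λ(y) ≤ c·λ(y_n)` with `r·c < t`, hence `rc(S, y_n) < t`.
-/

section

variable {S : Type*} [CuSemigroup S]

theorem HasRComparison.of_le_mul {r c : ℝ≥0∞} {w w' : S} (h : HasRComparison r w)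
    (hc : ∀ Λ : S → ℝ≥0∞, IsCuFunctional Λ → Λ w ≤ c * Λ w') :
    HasRComparison (r * c) w' := by
  refine fun x z hxz => h x z fun Λ hΛ => ?_
  calc Λ x + r * Λ w ≤ Λ x + r * (c * Λ w') := by gcongr; exact hc Λ hΛ
    _ = Λ x + r * c * Λ w' := by rw [mul_assoc]
    _ ≤ Λ z := hxz Λ hΛ

theorem rc_le_of_le {w w' : S} (h : w ≤ w') : rc w' ≤ rc w := by
  refine sInf_le_sInf fun r ⟨hr0, hrt, hr⟩ => ⟨hr0, hrt, ?_⟩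
  simpa using hr.of_le_mul (c := 1) fun Λ hΛ => by simpa using hΛ.mono h

theorem iInf_rc_le_of_iInf_rankRatio_le_one {ι : Type*} (w : S) (ws : ι → S)
    (h : ⨅ i, rankRatio w (ws i) ≤ 1) : ⨅ i, rc (ws i) ≤ rc w := by
  refine le_of_forall_gt_imp_ge_of_dense fun t ht => ?_
  obtain ⟨r, ⟨hr0, hrt, hr⟩, hrt_lt⟩ := sInf_lt_iff.mp (show rc w < t from ht)
  have hdiv : ∀ {c : ℝ≥0∞}, c < t / r ↔ c * r < t :=
    ENNReal.lt_div_iff_mul_lt (Or.inl hr0.ne') (Or.inl hrt)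
  obtain ⟨i, hi⟩ := iInf_lt_iff.mp (h.trans_lt (hdiv.mpr (by simpa using hrt_lt)))
  obtain ⟨c, ⟨hc0, hct, hc⟩, hc_lt⟩ := sInf_lt_iff.mp (show rankRatio w (ws i) < t / r from hi)
  calc ⨅ j, rc (ws j) ≤ rc (ws i) := iInf_le _ i
    _ ≤ r * c := sInf_le ⟨ENNReal.mul_pos hr0.ne' hc0.ne', ENNReal.mul_ne_top hrt hct,
        hr.of_le_mul hc⟩
    _ ≤ t := (mul_comm r c ▸ hdiv.mp hc_lt).le

end

theorem stmt2_general {S : Type*} [CuSemigroup S] (y : S) (ys : ℕ → S)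
    (hle : ∀ n, ys n ≤ y)
    (hlim : (⨅ n, rankRatio y (ys n)) = 1) :
    (⨅ n, rc (ys n)) = rc y :=
  le_antisymm (iInf_rc_le_of_iInf_rankRatio_le_one y ys hlim.le)
    (le_iInf fun n => rc_le_of_le (hle n))

/-- Corollary (rclimrho1): if moreover `lim_n ρ(y, y n) = 1`, then
`lim_n rc(S, y n) = rc(S, y)`. -/
theorem stmt2 {S : Type*} [CuSemigroup S] (y : S) (ys : ℕ → S)
    (hy : IsFull y) (hys : ∀ n, IsFull (ys n))
    (hmono : ∀ n, ys n ≤ ys (n + 1)) (hle : ∀ n, ys n ≤ y)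
    (hFy : FNormNonempty y)
    (hlim : (⨅ n, rankRatio y (ys n)) = 1) :
    (⨅ n, rc (ys n)) = rc y :=
  stmt2_general y ys hle hlim
end

section
/- Let S be a Cu-semigroup, let y be a full element of S, and let (y_n)_{n≥1} be a sequence of full elements of S with y_n ≤ y_{n+1} ≤ y for all n. If lim_{n→∞} ρ(y, y_n) = 0 (the sequence (ρ(y,y_n)) is decreasing, so the limit exists), then: (1) there is m such that F_y(S) = ∅ and F_{y_n}(S) = ∅ for all n ≥ m; (2) lim_{n→∞} rc(S, y_n) = rc(S, y); (3) if rc(S, y) < ∞, then lim_{n→∞} rc(S, y_n) = rc(S, y) = 0. -/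
/-!
If `ρ(y, y_m) < 1`, then `λ(y) ≤ r·λ(y_m) ≤ r·λ(y)` for some `r < 1` and every functional `λ`,
so every functional takes only the values `0` and `∞` on `y`, and, since `y_m ≤ y_n ≤ y`,
vanishes on `y_n` exactly when it vanishes on `y`. Hence `r·λ(y_n) = r'·λ(y)` for all nonzero
`r, r'`: no functional is normalized at `y` or `y_n`, and `r`-comparison relative to `y_n` or
to `y` does not depend on `r` or on which of these elements it is taken relative to.
-/

open scoped ENNReal

namespace ENNReal

theorem eq_zero_or_eq_top_of_le_mul_of_lt_one {a r : ℝ≥0∞} (hr : r < 1) (h : a ≤ r * a) :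
    a = 0 ∨ a = ⊤ := by
  by_contra! ha
  exact (h.trans_lt (by simpa using ENNReal.mul_lt_mul_left ha.1 ha.2 hr)).false

theorem eq_zero_of_forall_le {a : ℝ≥0∞} (h : ∀ r : ℝ≥0∞, 0 < r → r ≠ ⊤ → a ≤ r) : a = 0 :=
  nonpos_iff_eq_zero.mp <| ENNReal.le_of_forall_pos_le_add fun ε hε _ => by
    simpa using h ε (by exact_mod_cast hε) ENNReal.coe_ne_top

end ENNReal

section CuSemigroup

variable {S : Type*} [CuSemigroup S]

def ZeroOrTopTogether (w w' : S) : Prop :=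
  ∀ Λ : S → ℝ≥0∞, IsCuFunctional Λ → (Λ w = 0 ∧ Λ w' = 0) ∨ (Λ w = ⊤ ∧ Λ w' = ⊤)

theorem zeroOrTopTogether_of_rankRatio_lt_one {w y : S} (hwy : w ≤ y)
    (h : rankRatio y w < 1) : ZeroOrTopTogether w y := by
  obtain ⟨r, ⟨-, hr_top, hr⟩, hr_one⟩ := sInf_lt_iff.mp h
  intro Λ hΛ
  have hwy : Λ w ≤ Λ y := hΛ.mono hwy
  rcases ENNReal.eq_zero_or_eq_top_of_le_mul_of_lt_one hr_one
      ((hr Λ hΛ).trans (mul_le_mul_right hwy r)) with hy | hy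
  · exact .inl ⟨le_antisymm (hy ▸ hwy) zero_le, hy⟩
  · refine .inr ⟨?_, hy⟩
    by_contra hw
    exact ENNReal.mul_ne_top hr_top hw (top_le_iff.mp (hy ▸ hr Λ hΛ))

namespace ZeroOrTopTogether

variable {w w' : S}

theorem of_le_of_le {v : S} (h : ZeroOrTopTogether w w') (hwv : w ≤ v) (hvw' : v ≤ w') :
    ZeroOrTopTogether v w' := by
  intro Λ hΛ
  rcases h Λ hΛ with ⟨-, h'⟩ | ⟨h, h'⟩
  · exact .inl ⟨le_antisymm (h' ▸ hΛ.mono hvw') zero_le, h'⟩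
  · exact .inr ⟨top_le_iff.mp (h ▸ hΛ.mono hwv), h'⟩

theorem right (h : ZeroOrTopTogether w w') : ZeroOrTopTogether w' w' := fun Λ hΛ =>
  (h Λ hΛ).imp (fun h => ⟨h.2, h.2⟩) fun h => ⟨h.2, h.2⟩

theorem mul_eq_mul {Λ : S → ℝ≥0∞} (h : ZeroOrTopTogether w w') (hΛ : IsCuFunctional Λ)
    {r r' : ℝ≥0∞} (hr : r ≠ 0) (hr' : r' ≠ 0) : r * Λ w = r' * Λ w' := by
  rcases h Λ hΛ with ⟨hw, hw'⟩ | ⟨hw, hw'⟩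
  · simp [hw, hw']
  · simp [hw, hw', ENNReal.mul_top hr, ENNReal.mul_top hr']

theorem not_fNormNonempty (h : ZeroOrTopTogether w w') : ¬ FNormNonempty w := by
  rintro ⟨Λ, hΛ, hΛw⟩
  rcases h Λ hΛ with ⟨hw, -⟩ | ⟨hw, -⟩ <;> simp [hΛw] at hw

theorem hasRComparison_iff (h : ZeroOrTopTogether w w') {r r' : ℝ≥0∞} (hr : r ≠ 0)
    (hr' : r' ≠ 0) : HasRComparison r w ↔ HasRComparison r' w' :=
  forall₂_congr fun _ _ => imp_congr_left <| forall₂_congr fun _ hΛ => by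
    rw [h.mul_eq_mul hΛ hr hr']

theorem rc_eq (h : ZeroOrTopTogether w w') : rc w = rc w' := by
  unfold rc
  congr 1
  ext r
  exact and_congr_right fun hr => and_congr_right fun _ => h.hasRComparison_iff hr.ne' hr.ne'

theorem rc_eq_zero_of_ne_top (h : ZeroOrTopTogether w w) (htop : rc w ≠ ⊤) : rc w = 0 := by
  obtain ⟨r, hr, -, hcomp⟩ : {r : ℝ≥0∞ | 0 < r ∧ r ≠ ⊤ ∧ HasRComparison r w}.Nonempty :=
    Set.nonempty_iff_ne_empty.mpr fun hempty => htop (by rw [rc, hempty, sInf_empty])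
  exact ENNReal.eq_zero_of_forall_le fun r' hr' hr'_top =>
    sInf_le ⟨hr', hr'_top, (h.hasRComparison_iff hr.ne' hr'.ne').mp hcomp⟩

end ZeroOrTopTogether

theorem HasRComparison.mono {r : ℝ≥0∞} {w w' : S} (h : HasRComparison r w) (hww' : w ≤ w') :
    HasRComparison r w' := fun x z hxz =>
  h x z fun Λ hΛ => (add_le_add_right (mul_le_mul_right (hΛ.mono hww') r) _).trans (hxz Λ hΛ)

theorem rc_anti : Antitone (rc : S → ℝ≥0∞) := fun _ _ hww' =>
  sInf_le_sInf fun _ ⟨hr, hr_top, hcomp⟩ => ⟨hr, hr_top, hcomp.mono hww'⟩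

end CuSemigroup

theorem stmt5_general {S : Type*} [CuSemigroup S] (y : S) (ys : ℕ → S)
    (hmono : ∀ n, ys n ≤ ys (n + 1)) (hle : ∀ n, ys n ≤ y)
    (hlim : (⨅ n, rankRatio y (ys n)) = 0) :
    (∃ m, ¬ FNormNonempty y ∧ ∀ n ≥ m, ¬ FNormNonempty (ys n)) ∧
      (⨅ n, rc (ys n)) = rc y ∧
      (rc y ≠ ⊤ → (⨅ n, rc (ys n)) = 0 ∧ rc y = 0) := by
  obtain ⟨m, hm⟩ := iInf_lt_iff.mp (hlim ▸ zero_lt_one : (⨅ n, rankRatio y (ys n)) < 1)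
  have hdeg : ∀ n ≥ m, ZeroOrTopTogether (ys n) y := fun n hn =>
    (zeroOrTopTogether_of_rankRatio_lt_one (hle m) hm).of_le_of_le
      (monotone_nat_of_le_succ hmono hn) (hle n)
  have hinf : (⨅ n, rc (ys n)) = rc y :=
    le_antisymm (iInf_le_of_le m (hdeg m le_rfl).rc_eq.le) (le_iInf fun n => rc_anti (hle n))
  refine ⟨⟨m, (hdeg m le_rfl).right.not_fNormNonempty,
    fun n hn => (hdeg n hn).not_fNormNonempty⟩, hinf, fun htop => ?_⟩
  have hzero := (hdeg m le_rfl).right.rc_eq_zero_of_ne_top htop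
  exact ⟨hinf.trans hzero, hzero⟩

/-- Proposition (ExtremeZeroRho): for an increasing sequence `(y n)` of full
elements below a full element `y`, if `lim_n ρ(y, y n) = 0` (the limit being the
infimum of the decreasing sequence), then: (1) there is `m` with `F_y(S) = ∅` and
`F_{y n}(S) = ∅` for all `n ≥ m`; (2) `lim_n rc(S, y n) = rc(S, y)` (the limit
being the infimum of the decreasing sequence); (3) if `rc(S, y) < ∞`, then
`lim_n rc(S, y n) = rc(S, y) = 0`. -/
theorem stmt5 {S : Type*} [CuSemigroup S] (y : S) (ys : ℕ → S)
    (hy : IsFull y) (hys : ∀ n, IsFull (ys n))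
    (hmono : ∀ n, ys n ≤ ys (n + 1)) (hle : ∀ n, ys n ≤ y)
    (hlim : (⨅ n, rankRatio y (ys n)) = 0) :
    (∃ m, ¬ FNormNonempty y ∧ ∀ n ≥ m, ¬ FNormNonempty (ys n)) ∧
      (⨅ n, rc (ys n)) = rc y ∧
      (rc y ≠ ⊤ → (⨅ n, rc (ys n)) = 0 ∧ rc y = 0) :=
  stmt5_general y ys hmono hle hlim
end

section
/- Let S be a Cu-semigroup, let e be a full element of S, and let r ∈ (0,∞). If x, y ∈ S satisfy λ(x) + r·λ(e) ≤ λ(y) for every λ ∈ F(S), then y is full. -/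
open scoped ENNReal

/-!
The supremum `w = ∞·y` is idempotent, so the map that vanishes on `{s | s ≤ w}` and equals `∞`
elsewhere is a functional. It vanishes on `y`, so the hypothesis forces `r · λ(e) = 0`, and as
`r > 0` we get `e ≤ w`. Idempotency then gives `∞·e ≤ w`, and `∞·e` is the largest element.
-/

namespace CuSemigroup

variable {S : Type*} [CuSemigroup S]

theorem monotone_nsmul (a : S) : Monotone fun n : ℕ => n • a :=
  fun _ _ hnm => nsmul_le_nsmul_left (CuSemigroup.zero_le a) hnm

theorem exists_isLUB_nsmul (a : S) : ∃ s, IsLUB (Set.range fun n : ℕ => n • a) s :=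
  O1 _ (monotone_nsmul a)

theorem add_self_of_isLUB_nsmul {a w : S} (hw : IsLUB (Set.range fun n : ℕ => n • a) w) :
    w + w = w := by
  have hsum := O4 _ _ (monotone_nsmul a) (monotone_nsmul a) w w hw hw
  refine le_antisymm (hsum.2 ?_) (le_add_of_nonneg_right (CuSemigroup.zero_le w))
  rintro _ ⟨n, rfl⟩
  simpa only [add_nsmul] using hw.1 ⟨n + n, rfl⟩

theorem isLUB_nsmul_le {a t w : S} (ht : IsLUB (Set.range fun n : ℕ => n • a) t)
    (haw : a ≤ w) (hw : w + w ≤ w) : t ≤ w := by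
  refine ht.2 ?_
  rintro _ ⟨n, rfl⟩
  induction n with
  | zero => simpa using CuSemigroup.zero_le w
  | succ n ih => exact (succ_nsmul a n ▸ add_le_add ih haw).trans hw

open Classical in
/-- When `w + w ≤ w`, `{s | s ≤ w}` is an ideal of `S`; this is its `{0, ∞}`-valued functional. -/
noncomputable def idealFunctional (w s : S) : ℝ≥0∞ :=
  if s ≤ w then 0 else ⊤

theorem idealFunctional_eq_zero_iff {w s : S} : idealFunctional w s = 0 ↔ s ≤ w := by
  unfold idealFunctional
  split_ifs with hs <;> simp [hs]

theorem idealFunctional_of_not_le {w s : S} (hs : ¬s ≤ w) : idealFunctional w s = ⊤ :=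
  if_neg hs

theorem isCuFunctional_idealFunctional {w : S} (hw : w + w ≤ w) :
    IsCuFunctional (idealFunctional w) where
  map_zero := idealFunctional_eq_zero_iff.2 (CuSemigroup.zero_le w)
  map_add a b := by
    by_cases ha : a ≤ w
    · by_cases hb : b ≤ w
      · simp only [idealFunctional_eq_zero_iff.2 ha, idealFunctional_eq_zero_iff.2 hb,
          idealFunctional_eq_zero_iff.2 ((add_le_add ha hb).trans hw), add_zero]
      · have hab : ¬a + b ≤ w :=
          fun hab => hb ((le_add_of_nonneg_left (CuSemigroup.zero_le a)).trans hab)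
        simp only [idealFunctional_of_not_le hab, idealFunctional_of_not_le hb, add_top]
    · have hab : ¬a + b ≤ w :=
        fun hab => ha ((le_add_of_nonneg_right (CuSemigroup.zero_le b)).trans hab)
      simp only [idealFunctional_of_not_le hab, idealFunctional_of_not_le ha, top_add]
  mono a b hab := by
    by_cases hb : b ≤ w
    · exact (idealFunctional_eq_zero_iff.2 (hab.trans hb)).trans_le bot_le
    · simp only [idealFunctional_of_not_le hb, le_top]
  map_sup f _ s hs := by
    by_cases hsw : s ≤ w
    · rw [idealFunctional_eq_zero_iff.2 hsw, eq_comm, ENNReal.iSup_eq_zero]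
      exact fun n => idealFunctional_eq_zero_iff.2 ((hs.1 ⟨n, rfl⟩).trans hsw)
    · obtain ⟨n, hn⟩ : ∃ n, ¬f n ≤ w := by
        by_contra! hf
        exact hsw (hs.2 (by rintro _ ⟨n, rfl⟩; exact hf n))
      rw [idealFunctional_of_not_le hsw, eq_comm, eq_top_iff, ← idealFunctional_of_not_le hn]
      exact le_iSup (fun m => idealFunctional w (f m)) n

theorem isFull_of_le_isLUB_nsmul {e y w : S} (he : IsFull e)
    (hw : IsLUB (Set.range fun n : ℕ => n • y) w) (hew : e ≤ w) : IsFull y := by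
  intro s hs z
  obtain ⟨t, ht⟩ := exists_isLUB_nsmul e
  rw [hs.unique hw]
  exact (he t ht z).trans (isLUB_nsmul_le ht hew (add_self_of_isLUB_nsmul hw).le)

end CuSemigroup

theorem stmt13_general {S : Type*} [CuSemigroup S] (e : S) (he : IsFull e)
    (r : ℝ≥0∞) (hr0 : 0 < r) (x y : S)
    (h : ∀ Λ : S → ℝ≥0∞, IsCuFunctional Λ → Λ x + r * Λ e ≤ Λ y) :
    IsFull y := by
  obtain ⟨w, hw⟩ := CuSemigroup.exists_isLUB_nsmul y
  have hww : w + w ≤ w := (CuSemigroup.add_self_of_isLUB_nsmul hw).le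
  have hyw : y ≤ w := by simpa using hw.1 ⟨1, rfl⟩
  have key := h _ (CuSemigroup.isCuFunctional_idealFunctional hww)
  rw [CuSemigroup.idealFunctional_eq_zero_iff.2 hyw, nonpos_iff_eq_zero, add_eq_zero,
    mul_eq_zero] at key
  have hew : e ≤ w := CuSemigroup.idealFunctional_eq_zero_iff.1 (key.2.resolve_left hr0.ne')
  exact CuSemigroup.isFull_of_le_isLUB_nsmul he hw hew

/-- Lemma (LemFuRCDf): if `e` is full, `r ∈ (0,∞)`, and `x, y ∈ S` satisfy
`λ(x) + r·λ(e) ≤ λ(y)` for every functional `λ`, then `y` is full. -/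
theorem stmt13 {S : Type*} [CuSemigroup S] (e : S) (he : IsFull e)
    (r : ℝ≥0∞) (hr0 : 0 < r) (hrtop : r ≠ ⊤) (x y : S)
    (h : ∀ Λ : S → ℝ≥0∞, IsCuFunctional Λ → Λ x + r * Λ e ≤ Λ y) :
    IsFull y :=
  stmt13_general e he r hr0 x y h
end

section
/- Let A be a unital C*-algebra, let a be a full positive element of A, and let (a_n)_{n≥1} be a sequence of positive elements of A with a_n → a in norm. Then there exists n_0 such that a_m is full for all m ≥ n_0. -/
/-- An element `a` of a (topological) algebra is full if the closed linear span of
`{x * a * y : x, y}` is everything. -/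
def IsFullIn {B : Type*} [NonUnitalNonAssocSemiring B] [Module ℂ B]
    [TopologicalSpace B] (a : B) : Prop :=
  closure (↑(Submodule.span ℂ {z : B | ∃ x y : B, z = x * a * y}) : Set B) = Set.univ

/-- Lemma (FuSeq.El.Lem): in a unital C*-algebra, if `a` is a full positive element
and `(aₙ)` is a sequence of positive elements converging in norm to `a`, then `aₘ`
is full for all sufficiently large `m`. -/
theorem stmt17 {A : Type*} [CStarAlgebra A] [PartialOrder A] [StarOrderedRing A]
    (a : A) (ha_pos : 0 ≤ a) (ha_full : IsFullIn a)
    (aseq : ℕ → A) (hpos : ∀ n, 0 ≤ aseq n)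
    (hlim : Filter.Tendsto aseq Filter.atTop (nhds a)) :
    ∃ n₀ : ℕ, ∀ m ≥ n₀, IsFullIn (aseq m) := by
  classical
  have h1 : (1 : A) ∈ closure
      (↑(Submodule.span ℂ {z : A | ∃ x y : A, z = x * a * y}) : Set A) := by
    rw [ha_full]; trivial
  obtain ⟨s, hs_mem, hs_dist⟩ := Metric.mem_closure_iff.mp h1 (1/2) (by norm_num)
  obtain ⟨n, c, g, hg⟩ := Submodule.mem_span_set'.mp hs_mem
  choose x y hxy using fun i => (g i).2
  set F : A → A := fun b => ∑ i, c i • (x i * b * y i) with hF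
  have hFa : F a = s := by
    rw [hF, ← hg]
    exact Finset.sum_congr rfl fun i _ => by rw [hxy i]
  have hFcont : Continuous F := by
    apply continuous_finset_sum
    intro i _
    exact (((continuous_const.mul continuous_id).mul continuous_const).const_smul (c i))
  have htend : Filter.Tendsto (fun m => F (aseq m)) Filter.atTop (nhds s) := by
    rw [← hFa]; exact (hFcont.tendsto a).comp hlim
  have hev : ∀ᶠ m in Filter.atTop, ‖(1 : A) - F (aseq m)‖ < 1 := by
    filter_upwards [Metric.tendsto_nhds.mp htend (1/2) (by norm_num)] with m hm
    calc ‖(1 : A) - F (aseq m)‖ ≤ ‖(1 : A) - s‖ + ‖s - F (aseq m)‖ := by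
          simpa using norm_sub_le_norm_sub_add_norm_sub (1 : A) s (F (aseq m))
      _ < 1/2 + 1/2 := by
          apply add_lt_add
          · simpa [dist_eq_norm] using hs_dist
          · simpa [dist_eq_norm, norm_sub_rev] using hm
      _ = 1 := by norm_num
  obtain ⟨n₀, hn₀⟩ := Filter.eventually_atTop.mp hev
  refine ⟨n₀, fun m hm => ?_⟩
  set b := aseq m with hb
  have hnorm := hn₀ m hm
  set u : Aˣ := Units.oneSub (1 - F b) (by simpa using hnorm) with hu
  have huval : (u : A) = F b := by simp [hu, Units.oneSub]
  have hspan : Submodule.span ℂ {z : A | ∃ x y : A, z = x * b * y} = ⊤ := by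
    rw [eq_top_iff]
    intro z _
    have hz : z = ∑ i, c i • ((z * ↑u⁻¹ * x i) * b * y i) := by
      have : z = z * ↑u⁻¹ * F b := by
        rw [← huval, mul_assoc, u.inv_mul, mul_one]
      conv_lhs => rw [this]
      rw [hF, Finset.mul_sum]
      exact Finset.sum_congr rfl fun i _ => by rw [mul_smul_comm]; simp [mul_assoc]
    rw [hz]
    exact Submodule.sum_mem _ fun i _ => Submodule.smul_mem _ _
      (Submodule.subset_span ⟨z * ↑u⁻¹ * x i, y i, rfl⟩)
  rw [IsFullIn, hspan]
  simp
end

section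
/- Let X be a compact metric space and let A be a nonzero simple C*-algebra. Then an element b of the C*-algebra C(X, A) of continuous A-valued functions on X is full in C(X, A) if and only if b(x) ≠ 0 for every x ∈ X. -/
lemma aux_ne {A : Type*} [NonUnitalCStarAlgebra A] {c : A} (hc : c ≠ 0) :
    (c * star c) * c * (star c * c) ≠ 0 := by
  intro h
  set a := star c * c with ha
  have hsa : IsSelfAdjoint a := IsSelfAdjoint.star_mul_self c
  have haa : IsSelfAdjoint (a * a) := by
    rw [IsSelfAdjoint, star_mul, hsa.star_eq]
  have h4 : (a * a) * (a * a) = 0 := by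
    have key : (a * a) * (a * a) = a * (star c * ((c * star c) * c * (star c * c))) := by
      simp only [ha, mul_assoc]
    rw [key, h, mul_zero, mul_zero]
  have hn2 : ‖a * a‖ = ‖a‖ * ‖a‖ := by
    calc ‖a * a‖ = ‖star a * a‖ := by rw [hsa.star_eq]
    _ = ‖a‖ * ‖a‖ := CStarRing.norm_star_mul_self
  have hn4 : ‖(a * a) * (a * a)‖ = ‖a * a‖ * ‖a * a‖ := by
    calc ‖(a * a) * (a * a)‖ = ‖star (a * a) * (a * a)‖ := by rw [haa.star_eq]
    _ = ‖a * a‖ * ‖a * a‖ := CStarRing.norm_star_mul_self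
  have hz : ‖a‖ * ‖a‖ * (‖a‖ * ‖a‖) = 0 := by
    rw [← hn2, ← hn4, h4, norm_zero]
  have hA : a = 0 := by
    by_contra h0
    have hp : 0 < ‖a‖ := norm_pos_iff.mpr h0
    nlinarith [mul_pos (mul_pos hp hp) (mul_pos hp hp)]
  exact hc ((CStarRing.star_mul_self_eq_zero_iff c).mp hA)

lemma aux_fiber {A : Type*} [NonUnitalCStarAlgebra A]
    (hsimple : ∀ I : TwoSidedIdeal A, IsClosed (I : Set A) → I = ⊥ ∨ I = ⊤)
    {c : A} (hc : c ≠ 0) :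
    closure (↑(Submodule.span ℂ {z : A | ∃ u v : A, z = u * c * v}) : Set A) = Set.univ := by
  set Sc : Set A := {z : A | ∃ u v : A, z = u * c * v} with hSc
  set N : Set A := closure (↑(Submodule.span ℂ Sc) : Set A) with hN
  have hleft : ∀ x : A, ∀ z ∈ Submodule.span ℂ Sc, x * z ∈ Submodule.span ℂ Sc := by
    intro x z hz
    induction hz using Submodule.span_induction with
    | mem w hw =>
      obtain ⟨u, v, rfl⟩ := hw
      exact Submodule.subset_span ⟨x * u, v, by simp [mul_assoc]⟩
    | zero => simp
    | add w₁ w₂ _ _ h1 h2 => simpa [mul_add] using Submodule.add_mem _ h1 h2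
    | smul r w _ h1 => simpa [mul_smul_comm] using Submodule.smul_mem _ r h1
  have hright : ∀ x : A, ∀ z ∈ Submodule.span ℂ Sc, z * x ∈ Submodule.span ℂ Sc := by
    intro x z hz
    induction hz using Submodule.span_induction with
    | mem w hw =>
      obtain ⟨u, v, rfl⟩ := hw
      exact Submodule.subset_span ⟨u, v * x, by simp [mul_assoc]⟩
    | zero => simp
    | add w₁ w₂ _ _ h1 h2 => simpa [add_mul] using Submodule.add_mem _ h1 h2
    | smul r w _ h1 => simpa [smul_mul_assoc] using Submodule.smul_mem _ r h1
  set I : TwoSidedIdeal A := TwoSidedIdeal.mk' N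
    (subset_closure (Submodule.zero_mem _))
    (fun hx hy => map_mem_closure₂ continuous_add hx hy
      (fun a ha b hb => Submodule.add_mem _ ha hb))
    (fun hx => map_mem_closure continuous_neg hx (fun z hz => Submodule.neg_mem _ hz))
    (fun {x y} hy => map_mem_closure (continuous_mul_left x) hy (fun z hz => hleft x z hz))
    (fun {x y} hx => map_mem_closure (f := (· * y)) (continuous_mul_right y) hx
      (fun z hz => hright y z hz))
    with hI
  have hIN : (I : Set A) = N := TwoSidedIdeal.coe_mk' _ _ _ _ _ _
  rcases hsimple I (hIN ▸ isClosed_closure) with hbot | htop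
  · exfalso
    have he : (c * star c) * c * (star c * c) ∈ Sc := ⟨c * star c, star c * c, rfl⟩
    have hmem : (c * star c) * c * (star c * c) ∈ I := by
      rw [TwoSidedIdeal.mem_mk']
      exact subset_closure (Submodule.subset_span he)
    rw [hbot, TwoSidedIdeal.mem_bot] at hmem
    exact aux_ne hc hmem
  · apply Set.eq_univ_iff_forall.mpr
    intro a
    have : a ∈ I := htop ▸ TwoSidedIdeal.mem_top A
    rwa [TwoSidedIdeal.mem_mk'] at this

/-- Lemma (FullElements_Lem): let `X` be a compact metric space and `A` a nonzero
simple C*-algebra (its only closed two-sided ideals are `⊥` and `⊤`). An element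
`b` of `C(X, A)` is full if and only if `b x ≠ 0` for every `x ∈ X`. -/
theorem stmt18 {X : Type*} [MetricSpace X] [CompactSpace X]
    {A : Type*} [NonUnitalCStarAlgebra A] [Nontrivial A]
    (hsimple : ∀ I : TwoSidedIdeal A, IsClosed (I : Set A) → I = ⊥ ∨ I = ⊤)
    (b : C(X, A)) :
    IsFullIn b ↔ ∀ x : X, b x ≠ 0 := by
  set S : Set C(X, A) := {z : C(X, A) | ∃ x y : C(X, A), z = x * b * y} with hS
  set M : Submodule ℂ C(X, A) := Submodule.span ℂ S with hM
  constructor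
  · intro hfull x hbx
    obtain ⟨a, ha⟩ : ∃ a : A, a ≠ 0 := exists_ne 0
    set K : Set C(X, A) := {F : C(X, A) | F x = 0} with hK
    have hKc : IsClosed K :=
      isClosed_eq (continuous_eval_const x) continuous_const
    have hsub : (↑M : Set C(X, A)) ⊆ K := by
      intro z hz
      induction hz using Submodule.span_induction with
      | mem w hw =>
        obtain ⟨u, v, rfl⟩ := hw
        show (u * b * v) x = 0
        simp [hbx]
      | zero => show (0 : C(X, A)) x = 0; simp
      | add w₁ w₂ _ _ h1 h2 =>
        show (w₁ + w₂) x = 0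
        simp only [ContinuousMap.add_apply]
        rw [h1, h2, add_zero]
      | smul r w _ h1 =>
        show (r • w) x = 0
        simp only [ContinuousMap.smul_apply]
        rw [h1, smul_zero]
    have huniv : (Set.univ : Set C(X, A)) ⊆ K := by
      rw [← hfull]
      exact closure_minimal hsub hKc
    have : (ContinuousMap.const X a) x = 0 := huniv (Set.mem_univ _)
    simp at this
    exact ha this
  · intro hpt
    apply Set.eq_univ_iff_forall.mpr
    intro f
    rw [Metric.mem_closure_iff]
    intro ε hε
    -- pointwise approximations
    have key : ∀ x : X, ∃ F ∈ M, ‖f x - F x‖ < ε / 4 := by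
      intro x
      set evL : C(X, A) →ₗ[ℂ] A :=
        { toFun := fun F => F x, map_add' := fun _ _ => rfl, map_smul' := fun _ _ => rfl }
      have hx := aux_fiber hsimple (hpt x)
      have hfx : f x ∈ closure
          (↑(Submodule.span ℂ {z : A | ∃ u v : A, z = u * (b x) * v}) : Set A) := by
        rw [hx]; trivial
      rw [Metric.mem_closure_iff] at hfx
      obtain ⟨m, hm, hdm⟩ := hfx (ε / 4) (by linarith)
      have hmap : Submodule.span ℂ {z : A | ∃ u v : A, z = u * (b x) * v}
          ≤ Submodule.map evL M := by
        apply Submodule.span_le.mpr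
        rintro z ⟨u, v, rfl⟩
        exact ⟨(ContinuousMap.const X u) * b * (ContinuousMap.const X v),
          Submodule.subset_span ⟨_, _, rfl⟩, rfl⟩
      obtain ⟨F, hFM, hFx⟩ := hmap hm
      refine ⟨F, hFM, ?_⟩
      rw [show F x = evL F from rfl, hFx, ← dist_eq_norm]
      exact hdm
    choose F hFM hFx using key
    set U : X → Set X := fun x => {t | ‖f t - F x t‖ < ε / 2} with hU
    have hUopen : ∀ x, IsOpen (U x) := by
      intro x
      have hcont : Continuous fun t => ‖f t - F x t‖ := by
        have : Continuous fun t => (f - F x) t := (f - F x).continuous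
        simpa [ContinuousMap.sub_apply] using this.norm
      exact isOpen_lt hcont continuous_const
    have hxU : ∀ x, x ∈ U x := fun x => lt_trans (hFx x) (by linarith)
    obtain ⟨T, hT⟩ := isCompact_univ.elim_finite_subcover U hUopen
      (fun t _ => Set.mem_iUnion.mpr ⟨t, hxU t⟩)
    -- partition of unity
    obtain ⟨φ, hφ⟩ := PartitionOfUnity.exists_isSubordinate (ι := {y : X // y ∈ T})
      isClosed_univ (fun j => U j) (fun j => hUopen j)
      (by
        intro t _
        have := hT (Set.mem_univ t)
        rw [Set.mem_iUnion₂] at this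
        obtain ⟨x, hxT, hxUt⟩ := this
        exact Set.mem_iUnion.mpr ⟨⟨x, hxT⟩, hxUt⟩)
    -- smul stability of M
    have hsmul_mem : ∀ (ψ : C(X, ℝ)) (g : C(X, A)), g ∈ M → ψ • g ∈ M := by
      intro ψ g hg
      induction hg using Submodule.span_induction with
      | mem w hw =>
        obtain ⟨u, v, rfl⟩ := hw
        refine Submodule.subset_span ⟨ψ • u, v, ?_⟩
        ext t
        show ψ t • (u t * b t * v t) = (ψ t • u t) * b t * v t
        rw [← Complex.coe_smul, ← Complex.coe_smul, smul_mul_assoc, smul_mul_assoc]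
      | zero => simpa using Submodule.zero_mem M
      | add w₁ w₂ _ _ h1 h2 => simpa [smul_add] using Submodule.add_mem _ h1 h2
      | smul r w _ h1 =>
        have : ψ • (r • w) = r • (ψ • w) := by
          ext t
          show ψ t • (r • w t) = r • (ψ t • w t)
          exact smul_comm _ _ _
        rw [this]
        exact Submodule.smul_mem _ r h1
    set G : C(X, A) := ∑ j : {y : X // y ∈ T}, (φ j) • (F j) with hG
    have hGM : G ∈ M :=
      Submodule.sum_mem _ (fun j _ => hsmul_mem (φ j) (F j) (hFM j))
    refine ⟨G, hGM, ?_⟩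
    rw [dist_eq_norm]
    have hbound : ∀ t : X, ‖(f - G) t‖ ≤ ε / 2 := by
      intro t
      have hsum1 : ∑ j : {y : X // y ∈ T}, φ j t = 1 := by
        have := φ.sum_eq_one (Set.mem_univ t)
        rwa [finsum_eq_sum_of_fintype] at this
      have hGt : G t = ∑ j : {y : X // y ∈ T}, φ j t • F j t := by
        rw [hG]
        simp only [ContinuousMap.coe_sum, Finset.sum_apply]
        rfl
      have hdiff : (f - G) t = ∑ j : {y : X // y ∈ T}, φ j t • (f t - F j t) := by
        have : f t = ∑ j : {y : X // y ∈ T}, φ j t • f t := by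
          rw [← Finset.sum_smul, hsum1, one_smul]
        rw [ContinuousMap.sub_apply, hGt]
        conv_lhs => rw [this]
        rw [← Finset.sum_sub_distrib]
        exact Finset.sum_congr rfl (fun j _ => (smul_sub _ _ _).symm)
      rw [hdiff]
      calc ‖∑ j : {y : X // y ∈ T}, φ j t • (f t - F j t)‖
          ≤ ∑ j : {y : X // y ∈ T}, ‖φ j t • (f t - F j t)‖ := norm_sum_le _ _
        _ ≤ ∑ j : {y : X // y ∈ T}, φ j t * (ε / 2) := by
            apply Finset.sum_le_sum
            intro j _
            rw [norm_smul, Real.norm_of_nonneg (φ.nonneg j t)]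
            by_cases hjt : φ j t = 0
            · simp [hjt]
            · have htU : t ∈ U j := hφ j (subset_closure (by simpa using hjt))
              exact mul_le_mul_of_nonneg_left (le_of_lt htU) (φ.nonneg j t)
        _ = ε / 2 := by rw [← Finset.sum_mul, hsum1, one_mul]
    have : ‖f - G‖ ≤ ε / 2 := (ContinuousMap.norm_le _ (by linarith)).mpr hbound
    linarith
end
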